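/- arXiv:2605.01397 — 7 statements merged into one kernel-verified Lean document; each statement's English description precedes it below -/
import Mathlib

section
/- Define T : c₀ → c₀ by Tx = x − f(x)·e₁, where f(x) = ∑_{j≥2} 2^{1-j} x_j. Then for every x in the unit sphere of c₀, ‖Tx‖ ≥ 1/2. -/
lemma aux_coe_le (z : ZeroAtInftyContinuousMap ℕ ℝ) (k : ℕ) : |z k| ≤ ‖z‖ := by
  have := z.toBCF.norm_coe_le_norm k
  simpa [ZeroAtInftyContinuousMap.norm_toBCF_eq_norm] using this

lemma aux_norm_le (z : ZeroAtInftyContinuousMap ℕ ℝ) (C : ℝ) (hC : 0 ≤ C)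
    (h : ∀ k, |z k| ≤ C) : ‖z‖ ≤ C := by
  rw [← ZeroAtInftyContinuousMap.norm_toBCF_eq_norm]
  exact (BoundedContinuousFunction.norm_le hC).2 h

lemma aux_coef_nonneg (j : ℕ) : (0:ℝ) ≤ (if j = 0 then 0 else ((2:ℝ)⁻¹) ^ j) := by
  split <;> positivity

lemma aux_coef_le (j : ℕ) : (if j = 0 then 0 else ((2:ℝ)⁻¹) ^ j) ≤ ((2:ℝ)⁻¹) ^ j := by
  split
  · positivity
  · exact le_rfl

lemma aux_geo : Summable (fun j : ℕ => ((2:ℝ)⁻¹) ^ j) :=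
  summable_geometric_of_lt_one (by norm_num) (by norm_num)

lemma aux_coef_summable : Summable (fun j : ℕ => (if j = 0 then 0 else ((2:ℝ)⁻¹) ^ j)) :=
  Summable.of_nonneg_of_le aux_coef_nonneg aux_coef_le aux_geo

lemma aux_coef_tsum : ∑' j : ℕ, (if j = 0 then 0 else ((2:ℝ)⁻¹) ^ j) = 1 := by
  have h2 : ∑' j : ℕ, ((2:ℝ)⁻¹) ^ j = 2 := by
    rw [tsum_geometric_of_lt_one (by norm_num) (by norm_num)]; norm_num
  have h0 := Summable.tsum_eq_zero_add (f := fun j : ℕ => ((2:ℝ)⁻¹) ^ j) aux_geo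
  have heq : ∑' j : ℕ, (if j = 0 then 0 else ((2:ℝ)⁻¹) ^ j)
      = ∑' j : ℕ, ((2:ℝ)⁻¹) ^ (j + 1) := by
    rw [Summable.tsum_eq_zero_add aux_coef_summable]
    simp
  rw [heq]
  rw [h2] at h0
  norm_num at h0
  linarith

/-- For T x = x - f(x) e₁, every x in the unit sphere of c₀ satisfies
‖T x‖ ≥ 1/2. -/
theorem stmt_1
    (f : ZeroAtInftyContinuousMap ℕ ℝ →L[ℝ] ℝ)
    (hf : ∀ x : ZeroAtInftyContinuousMap ℕ ℝ,
      f x = ∑' j : ℕ, (if j = 0 then 0 else ((2 : ℝ)⁻¹) ^ j) * x j)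
    (e₁ : ZeroAtInftyContinuousMap ℕ ℝ)
    (he₁ : ⇑e₁ = fun k => if k = 0 then 1 else 0)
    (x : ZeroAtInftyContinuousMap ℕ ℝ) (hx : ‖x‖ = 1) :
    (1 / 2 : ℝ) ≤ ‖x - f x • e₁‖ := by
  set y := x - f x • e₁ with hy
  set M := ‖y‖ with hM
  have hM0 : 0 ≤ M := norm_nonneg y
  have hyk : ∀ k, y k = x k - f x * e₁ k := by
    intro k; simp [hy]
  have hyk' : ∀ k, k ≠ 0 → y k = x k := by
    intro k hk; rw [hyk k, he₁]; simp [hk]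
  have hxk : ∀ k, k ≠ 0 → |x k| ≤ M := by
    intro k hk; rw [← hyk' k hk]; exact aux_coe_le y k
  -- summability of the series defining f x, and its abs version
  have habs : ∀ j : ℕ, |(if j = 0 then 0 else ((2:ℝ)⁻¹) ^ j) * x j|
      ≤ (if j = 0 then 0 else ((2:ℝ)⁻¹) ^ j) * ‖x‖ := by
    intro j
    rw [abs_mul, abs_of_nonneg (aux_coef_nonneg j)]
    exact mul_le_mul_of_nonneg_left (aux_coe_le x j) (aux_coef_nonneg j)
  have hMsum : Summable (fun j : ℕ => (if j = 0 then 0 else ((2:ℝ)⁻¹) ^ j) * M) :=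
    aux_coef_summable.mul_right M
  have hsumup : Summable (fun j : ℕ => (if j = 0 then 0 else ((2:ℝ)⁻¹) ^ j) * ‖x‖) :=
    aux_coef_summable.mul_right ‖x‖
  have hsumabs : Summable (fun j : ℕ => |(if j = 0 then 0 else ((2:ℝ)⁻¹) ^ j) * x j|) :=
    Summable.of_nonneg_of_le (fun j => abs_nonneg _) habs hsumup
  have hsum2 : Summable (fun j : ℕ => (if j = 0 then 0 else ((2:ℝ)⁻¹) ^ j) * x j) := by
    apply Summable.of_norm
    simpa [Real.norm_eq_abs] using hsumabs
  -- |f x| ≤ M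
  have hfx : |f x| ≤ M := by
    rw [hf x]
    calc |∑' j : ℕ, (if j = 0 then 0 else ((2:ℝ)⁻¹) ^ j) * x j|
        ≤ ∑' j : ℕ, |(if j = 0 then 0 else ((2:ℝ)⁻¹) ^ j) * x j| := by
          simpa [Real.norm_eq_abs] using
            norm_tsum_le_tsum_norm (f := fun j : ℕ => (if j = 0 then 0 else ((2:ℝ)⁻¹) ^ j) * x j)
              (by simpa [Real.norm_eq_abs] using hsumabs)
      _ ≤ ∑' j : ℕ, (if j = 0 then 0 else ((2:ℝ)⁻¹) ^ j) * M := by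
          apply Summable.tsum_le_tsum _ hsumabs hMsum
          intro j
          rw [abs_mul, abs_of_nonneg (aux_coef_nonneg j)]
          rcases eq_or_ne j 0 with h | h
          · simp [h]
          · exact mul_le_mul_of_nonneg_left (hxk j h) (aux_coef_nonneg j)
      _ = M := by rw [tsum_mul_right, aux_coef_tsum, one_mul]
  have hx0 : |x 0| ≤ 2 * M := by
    have h0 : y 0 = x 0 - f x := by rw [hyk 0, he₁]; simp
    have hb := aux_coe_le y 0
    rw [h0] at hb
    calc |x 0| = |(x 0 - f x) + f x| := by ring_nf
      _ ≤ |x 0 - f x| + |f x| := abs_add_le _ _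
      _ ≤ M + M := add_le_add hb hfx
      _ = 2 * M := by ring
  have hfin : ‖x‖ ≤ 2 * M := by
    apply aux_norm_le x (2 * M) (by linarith)
    intro k
    rcases eq_or_ne k 0 with h | h
    · rw [h]; exact hx0
    · linarith [hxk k h]
  rw [hx] at hfin
  linarith
end

section
/- Define T : c₀ → c₀ by Tx = x − f(x)·e₁, where f(x) = ∑_{j≥2} 2^{1-j} x_j. Then the minimum modulus m(T) = inf{‖Tx‖ : x ∈ S_{c₀}} equals 1/2. -/
open Filter

namespace StmtTwoAux

/-- pointwise bound by norm in c₀ -/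
lemma abs_apply_le_norm (x : ZeroAtInftyContinuousMap ℕ ℝ) (k : ℕ) : |x k| ≤ ‖x‖ := by
  rw [← ZeroAtInftyContinuousMap.norm_toBCF_eq_norm]
  exact x.toBCF.norm_coe_le_norm k

/-- norm bound from pointwise bounds -/
lemma norm_le_of_forall {x : ZeroAtInftyContinuousMap ℕ ℝ} {C : ℝ} (hC : 0 ≤ C)
    (h : ∀ k, |x k| ≤ C) : ‖x‖ ≤ C := by
  rw [← ZeroAtInftyContinuousMap.norm_toBCF_eq_norm]
  exact (BoundedContinuousFunction.norm_le hC).2 h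

/-- the finitely supported approximants -/
noncomputable def xseq (n : ℕ) : ZeroAtInftyContinuousMap ℕ ℝ where
  toFun := fun k => if k = 0 then 1 else if k ≤ n then 1/2 else 0
  continuous_toFun := continuous_of_discreteTopology
  zero_at_infty' := by
    rw [cocompact_eq_cofinite, Nat.cofinite_eq_atTop]
    apply Tendsto.congr' _ tendsto_const_nhds
    filter_upwards [eventually_atTop.2 ⟨n+1, fun k hk => hk⟩] with k hk
    have h1 : ¬ k = 0 := by omega
    have h2 : ¬ k ≤ n := by omega
    simp [h1, h2]

lemma xseq_apply (n k : ℕ) : xseq n k = if k = 0 then 1 else if k ≤ n then 1/2 else 0 := rfl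

lemma xseq_norm (n : ℕ) : ‖xseq n‖ = 1 := by
  refine le_antisymm (norm_le_of_forall zero_le_one fun k => ?_) ?_
  · rw [xseq_apply]
    split_ifs <;> rw [abs_le] <;> constructor <;> norm_num
  · have := abs_apply_le_norm (xseq n) 0
    rw [xseq_apply] at this
    simpa using this

end StmtTwoAux

open StmtTwoAux

/-- The minimum modulus of a bounded operator. -/
noncomputable def minMod {X Y : Type*} [NormedAddCommGroup X] [NormedAddCommGroup Y]
    [NormedSpace ℝ X] [NormedSpace ℝ Y] (T : X →L[ℝ] Y) : ℝ :=
  sInf ((fun x => ‖T x‖) '' {x : X | ‖x‖ = 1})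

/-- For T x = x - f(x) e₁ on c₀, m(T) = 1/2. -/
theorem stmt_2
    (f : ZeroAtInftyContinuousMap ℕ ℝ →L[ℝ] ℝ)
    (hf : ∀ x : ZeroAtInftyContinuousMap ℕ ℝ,
      f x = ∑' j : ℕ, (if j = 0 then 0 else ((2 : ℝ)⁻¹) ^ j) * x j)
    (e₁ : ZeroAtInftyContinuousMap ℕ ℝ)
    (he₁ : ⇑e₁ = fun k => if k = 0 then 1 else 0)
    (T : ZeroAtInftyContinuousMap ℕ ℝ →L[ℝ] ZeroAtInftyContinuousMap ℕ ℝ)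
    (hT : ∀ x, T x = x - f x • e₁) :
    minMod T = 1 / 2 := by
  classical
  set c : ℕ → ℝ := fun j => if j = 0 then 0 else ((2:ℝ)⁻¹) ^ j with hc
  have hc_nonneg : ∀ j, 0 ≤ c j := by
    intro j; rw [hc]; dsimp only; split_ifs <;> positivity
  have hc_le : ∀ j, c j ≤ ((2:ℝ)⁻¹) ^ j := by
    intro j; rw [hc]; dsimp only; split_ifs with h
    · positivity
    · exact le_rfl
  have hc_summable : Summable c :=
    Summable.of_nonneg_of_le hc_nonneg hc_le
      (summable_geometric_of_lt_one (by norm_num) (by norm_num))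
  have hc_sum : ∑' j, c j = 1 := by
    rw [Summable.tsum_eq_zero_add hc_summable]
    have h0 : ∀ b : ℕ, c (b + 1) = (2:ℝ)⁻¹ * ((2:ℝ)⁻¹) ^ b := by
      intro b; rw [hc]; simp [pow_succ, mul_comm]
    simp only [h0]
    rw [tsum_mul_left, tsum_geometric_of_lt_one (by norm_num) (by norm_num)]
    norm_num [hc]
  -- pointwise formula for T
  have hT_apply : ∀ (x : ZeroAtInftyContinuousMap ℕ ℝ) (k : ℕ),
      T x k = x k - f x * (if k = 0 then 1 else 0) := by
    intro x k
    rw [hT x]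
    simp [he₁]
  have hT_apply_ne : ∀ (x : ZeroAtInftyContinuousMap ℕ ℝ) (k : ℕ), k ≠ 0 → T x k = x k := by
    intro x k hk; rw [hT_apply]; simp [hk]
  -- key lower bound: ‖x‖ ≤ 2 ‖T x‖
  have key : ∀ x : ZeroAtInftyContinuousMap ℕ ℝ, ‖x‖ ≤ 2 * ‖T x‖ := by
    intro x
    have hTa : (0:ℝ) ≤ ‖T x‖ := norm_nonneg _
    have hbound : ∀ j, |c j * x j| ≤ c j * ‖T x‖ := by
      intro j
      by_cases hj : j = 0
      · simp [hj, hc]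
      · rw [abs_mul, abs_of_nonneg (hc_nonneg j)]
        exact mul_le_mul_of_nonneg_left
          (by rw [← hT_apply_ne x j hj]; exact abs_apply_le_norm (T x) j) (hc_nonneg j)
    have hsum2 : Summable (fun j => c j * ‖T x‖) := hc_summable.mul_right _
    have hsum_norm : Summable (fun j => |c j * x j|) :=
      Summable.of_nonneg_of_le (fun j => abs_nonneg _) hbound hsum2
    have hsum1 : Summable (fun j => c j * x j) := hsum_norm.of_abs
    have hfx : |f x| ≤ ‖T x‖ := by
      rw [hf x]
      have hsum_norm' : Summable (fun j => ‖c j * x j‖) := hsum_norm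
      have hbound' : ∀ j, ‖c j * x j‖ ≤ c j * ‖T x‖ := hbound
      calc ‖∑' j, c j * x j‖ ≤ ∑' j, ‖c j * x j‖ := norm_tsum_le_tsum_norm hsum_norm'
        _ ≤ ∑' j, c j * ‖T x‖ := Summable.tsum_le_tsum hbound' hsum_norm' hsum2
        _ = (∑' j, c j) * ‖T x‖ := tsum_mul_right
        _ = ‖T x‖ := by rw [hc_sum, one_mul]
    refine norm_le_of_forall (by linarith) fun k => ?_
    by_cases hk : k = 0
    · have h1 : x k = T x k + f x := by rw [hT_apply x k]; simp [hk]
      calc |x k| ≤ |T x k| + |f x| := h1 ▸ abs_add_le _ _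
        _ ≤ ‖T x‖ + ‖T x‖ := add_le_add (abs_apply_le_norm _ _) hfx
        _ = 2 * ‖T x‖ := by ring
    · rw [← hT_apply_ne x k hk]
      exact (abs_apply_le_norm (T x) k).trans (by linarith)
  have hSne : ((fun x => ‖T x‖) '' {x : ZeroAtInftyContinuousMap ℕ ℝ | ‖x‖ = 1}).Nonempty :=
    ⟨‖T (xseq 0)‖, ⟨xseq 0, xseq_norm 0, rfl⟩⟩
  have hSbdd : BddBelow ((fun x => ‖T x‖) '' {x : ZeroAtInftyContinuousMap ℕ ℝ | ‖x‖ = 1}) := by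
    refine ⟨0, fun b hb => ?_⟩
    obtain ⟨x, -, rfl⟩ := hb
    exact norm_nonneg _
  refine le_antisymm ?_ (le_csInf hSne ?_)
  · -- upper bound
    refine le_of_forall_pos_le_add fun ε hε => ?_
    obtain ⟨n, hn⟩ := exists_pow_lt_of_lt_one hε (by norm_num : (2:ℝ)⁻¹ < 1)
    have hpow_pos : (0:ℝ) < (2:ℝ)⁻¹ ^ n := by positivity
    -- compute f (xseq n)
    have hfxn : f (xseq n) = (1 - (2:ℝ)⁻¹ ^ n) / 2 := by
      rw [hf]
      have hzero : ∀ j ∉ Finset.range (n+1), c j * (xseq n) j = 0 := by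
        intro j hj
        rw [Finset.mem_range, not_lt] at hj
        have h1 : ¬ j = 0 := by omega
        have h2 : ¬ j ≤ n := by omega
        rw [xseq_apply]
        simp [h1, h2]
      rw [show (∑' j : ℕ, (if j = 0 then 0 else ((2:ℝ)⁻¹) ^ j) * (xseq n) j)
            = ∑' j : ℕ, c j * (xseq n) j from rfl, tsum_eq_sum hzero]
      have hcong : ∀ j ∈ Finset.range (n+1), c j * (xseq n) j = c j * (1/2) := by
        intro j hj
        rw [Finset.mem_range] at hj
        by_cases hj0 : j = 0
        · simp [hj0, hc]
        · have : j ≤ n := by omega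
          rw [xseq_apply]
          simp [hj0, this]
      rw [Finset.sum_congr rfl hcong, ← Finset.sum_mul]
      have hcsum : ∑ j ∈ Finset.range (n+1), c j
          = (∑ j ∈ Finset.range (n+1), ((2:ℝ)⁻¹) ^ j) - 1 := by
        have : ∀ j ∈ Finset.range (n+1), c j
            = ((2:ℝ)⁻¹) ^ j - (if j = 0 then 1 else 0) := by
          intro j _
          rw [hc]
          by_cases hj0 : j = 0 <;> simp [hj0]
        rw [Finset.sum_congr rfl this, Finset.sum_sub_distrib]
        congr 1
        rw [Finset.sum_ite_eq' (Finset.range (n+1)) 0 (fun _ => (1:ℝ))]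
        simp
      rw [hcsum, geom_sum_eq (by norm_num : (2:ℝ)⁻¹ ≠ 1) (n+1), pow_succ]
      field_simp
      ring
    have hnorm : ‖T (xseq n)‖ ≤ 1/2 + (2:ℝ)⁻¹ ^ n / 2 := by
      refine norm_le_of_forall (by positivity) fun k => ?_
      by_cases hk : k = 0
      · have h0 : T (xseq n) k = 1/2 + (2:ℝ)⁻¹ ^ n / 2 := by
          rw [hT_apply, hfxn, xseq_apply, hk]
          norm_num
          ring
        rw [h0, abs_of_nonneg (by positivity)]
      · rw [hT_apply_ne _ k hk, xseq_apply, if_neg hk]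
        split_ifs with h
        · rw [show |(1/2:ℝ)| = 1/2 from abs_of_nonneg (by norm_num)]
          linarith
        · rw [abs_zero]
          positivity
    calc minMod T ≤ ‖T (xseq n)‖ := csInf_le hSbdd ⟨xseq n, xseq_norm n, rfl⟩
      _ ≤ 1/2 + (2:ℝ)⁻¹ ^ n / 2 := hnorm
      _ ≤ 1/2 + ε := by linarith
  · rintro b ⟨x, hx, rfl⟩
    have := key x
    rw [Set.mem_setOf_eq] at hx
    rw [hx] at this
    linarith
end

section
/- Define T : c₀ → c₀ by Tx = x − f(x)·e₁, where f(x) = ∑_{j≥2} 2^{1-j} x_j. Then there is no x in the unit sphere of c₀ with ‖Tx‖ = 1/2; that is, T does not attain its minimum modulus m(T) = 1/2. -/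
noncomputable def wt (j : ℕ) : ℝ := if j = 0 then 0 else (2:ℝ)⁻¹ ^ j

lemma wt_nonneg (j : ℕ) : 0 ≤ wt j := by
  unfold wt; split; · norm_num
  positivity

lemma wt_le (j : ℕ) : wt j ≤ (2:ℝ)⁻¹ ^ j := by
  unfold wt; split; · positivity
  exact le_refl _

lemma wt_summable : Summable wt :=
  Summable.of_nonneg_of_le wt_nonneg wt_le (summable_geometric_of_lt_one (by norm_num) (by norm_num))

lemma wt_tsum : ∑' j, wt j = 1 := by
  rw [Summable.tsum_eq_zero_add (wt_summable)]
  have h1 : ∀ j : ℕ, wt (j + 1) = (2:ℝ)⁻¹ * (2:ℝ)⁻¹ ^ j := by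
    intro j; unfold wt; rw [if_neg (Nat.succ_ne_zero j)]; ring
  rw [tsum_congr h1, tsum_mul_left, tsum_geometric_of_lt_one (by norm_num) (by norm_num)]
  unfold wt; norm_num

lemma wt_pos (j : ℕ) (hj : j ≠ 0) : 0 < wt j := by
  unfold wt; rw [if_neg hj]; positivity

lemma wtmul_abs_le (g : ℕ → ℝ) (c : ℝ) (h : ∀ j, j ≠ 0 → |g j| ≤ c) (j : ℕ) :
    |wt j * g j| ≤ wt j * c := by
  rcases eq_or_ne j 0 with rfl | hj
  · simp [wt]
  · rw [abs_mul, abs_of_nonneg (wt_nonneg j)]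
    exact mul_le_mul_of_nonneg_left (h j hj) (wt_nonneg j)

lemma wtmul_abs_summable (g : ℕ → ℝ) (c : ℝ) (h : ∀ j, j ≠ 0 → |g j| ≤ c) :
    Summable (fun j => |wt j * g j|) :=
  Summable.of_nonneg_of_le (fun j => abs_nonneg _) (wtmul_abs_le g c h)
    (wt_summable.mul_right c)

lemma wtmul_summable (g : ℕ → ℝ) (c : ℝ) (h : ∀ j, j ≠ 0 → |g j| ≤ c) :
    Summable (fun j => wt j * g j) :=
  (summable_abs_iff).1 (wtmul_abs_summable g c h)

lemma abs_tsum_le (g : ℕ → ℝ) (c : ℝ) (h : ∀ j, j ≠ 0 → |g j| ≤ c) :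
    |∑' j, wt j * g j| ≤ ∑' j, |wt j * g j| := by
  have := norm_tsum_le_tsum_norm (f := fun j => wt j * g j)
    (by simpa only [Real.norm_eq_abs] using wtmul_abs_summable g c h)
  simpa only [Real.norm_eq_abs] using this

lemma wtmul_tsum_c (c : ℝ) : ∑' j, wt j * c = c := by
  rw [tsum_mul_right, wt_tsum, one_mul]

lemma wtmul_bound (g : ℕ → ℝ) (c : ℝ) (h : ∀ j, j ≠ 0 → |g j| ≤ c) :
    |∑' j, wt j * g j| ≤ c := by
  refine (abs_tsum_le g c h).trans ?_
  rw [← wtmul_tsum_c c]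
  exact Summable.tsum_le_tsum (wtmul_abs_le g c h) (wtmul_abs_summable g c h) (wt_summable.mul_right c)

lemma wtmul_bound_strict (g : ℕ → ℝ) (c : ℝ) (h : ∀ j, j ≠ 0 → |g j| ≤ c)
    (N : ℕ) (hN : N ≠ 0) (hNs : |g N| < c) :
    |∑' j, wt j * g j| < c := by
  refine (abs_tsum_le g c h).trans_lt ?_
  have h2 : ∑' j, |wt j * g j| < ∑' j, wt j * c := by
    apply Summable.tsum_lt_tsum (i := N) (wtmul_abs_le g c h) _
      (wtmul_abs_summable g c h) (wt_summable.mul_right c)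
    rw [abs_mul, abs_of_nonneg (wt_nonneg N)]
    exact mul_lt_mul_of_pos_left hNs (wt_pos N hN)
  rwa [wtmul_tsum_c c] at h2

lemma sum_range_wt (m : ℕ) : ∑ j ∈ Finset.range (m+1), wt j = 1 - (2:ℝ)⁻¹ ^ m := by
  induction m with
  | zero => simp [wt]
  | succ m ih =>
    rw [Finset.sum_range_succ, ih]
    unfold wt
    rw [if_neg (Nat.succ_ne_zero m)]
    ring

noncomputable def yfun (n : ℕ) : ℕ → ℝ := fun k => if k = 0 then 1 else if k ≤ n then 1/2 else 0

noncomputable def yy (n : ℕ) : ZeroAtInftyContinuousMap ℕ ℝ where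
  toFun := yfun n
  continuous_toFun := continuous_of_discreteTopology
  zero_at_infty' := by
    rw [Filter.cocompact_eq_cofinite, Nat.cofinite_eq_atTop]
    apply Filter.Tendsto.congr' _ tendsto_const_nhds
    filter_upwards [Filter.eventually_ge_atTop (n+1)] with k hk
    have h1 : k ≠ 0 := by omega
    have h2 : ¬ k ≤ n := by omega
    simp [yfun, h1, h2]

@[simp] lemma yy_apply (n k : ℕ) : yy n k = yfun n k := rfl

lemma tsum_wt_yfun (n : ℕ) : ∑' j, wt j * yfun n j = 1/2 - (2:ℝ)⁻¹ ^ (n+1) := by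
  rw [tsum_eq_sum (s := Finset.range (n+1)) (by
    intro j hj
    rw [Finset.mem_range, not_lt] at hj
    have h1 : j ≠ 0 := by omega
    have h2 : ¬ j ≤ n := by omega
    simp [yfun, h1, h2])]
  have : ∀ j ∈ Finset.range (n+1), wt j * yfun n j = wt j * (1/2) := by
    intro j hj
    rw [Finset.mem_range] at hj
    rcases eq_or_ne j 0 with rfl | h1
    · simp [wt]
    · have h2 : j ≤ n := by omega
      simp [yfun, h1, h2]
  rw [Finset.sum_congr rfl this, ← Finset.sum_mul, sum_range_wt n]
  rw [pow_succ]
  ring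


/-- For T x = x - f(x) e₁ on c₀, there is no unit vector x with
‖T x‖ = 1/2, i.e. T does not attain its minimum modulus m(T) = 1/2. -/
theorem stmt_3
    (f : ZeroAtInftyContinuousMap ℕ ℝ →L[ℝ] ℝ)
    (hf : ∀ x : ZeroAtInftyContinuousMap ℕ ℝ,
      f x = ∑' j : ℕ, (if j = 0 then 0 else ((2 : ℝ)⁻¹) ^ j) * x j)
    (e₁ : ZeroAtInftyContinuousMap ℕ ℝ)
    (he₁ : ⇑e₁ = fun k => if k = 0 then 1 else 0)
    (T : ZeroAtInftyContinuousMap ℕ ℝ →L[ℝ] ZeroAtInftyContinuousMap ℕ ℝ)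
    (hT : ∀ x, T x = x - f x • e₁) :
    (¬ ∃ x : ZeroAtInftyContinuousMap ℕ ℝ, ‖x‖ = 1 ∧ ‖T x‖ = 1 / 2) ∧
    minMod T = 1 / 2 := by
  -- basic norm facts
  have habs : ∀ (x : ZeroAtInftyContinuousMap ℕ ℝ) (j : ℕ), |x j| ≤ ‖x‖ := by
    intro x j
    rw [← ZeroAtInftyContinuousMap.norm_toBCF_eq_norm]
    exact x.toBCF.norm_coe_le_norm j
  have hnormle : ∀ (x : ZeroAtInftyContinuousMap ℕ ℝ) (C : ℝ), 0 ≤ C →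
      (∀ j, |x j| ≤ C) → ‖x‖ ≤ C := by
    intro x C hC h
    rw [← ZeroAtInftyContinuousMap.norm_toBCF_eq_norm]
    exact (BoundedContinuousFunction.norm_le hC).2 h
  have hfx : ∀ x : ZeroAtInftyContinuousMap ℕ ℝ, f x = ∑' j, wt j * x j := by
    intro x; rw [hf x]; rfl
  have hTk : ∀ (x : ZeroAtInftyContinuousMap ℕ ℝ) (k : ℕ),
      (T x) k = x k - f x * (if k = 0 then 1 else 0) := by
    intro x k
    rw [hT]
    simp [he₁]
  have hT0 : ∀ x : ZeroAtInftyContinuousMap ℕ ℝ, (T x) 0 = x 0 - f x := by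
    intro x; rw [hTk]; simp
  have hTne : ∀ (x : ZeroAtInftyContinuousMap ℕ ℝ) (k : ℕ), k ≠ 0 → (T x) k = x k := by
    intro x k hk; rw [hTk, if_neg hk]; ring
  -- the key strict inequality
  have key : ∀ x : ZeroAtInftyContinuousMap ℕ ℝ, ‖x‖ = 1 → 1/2 < ‖T x‖ := by
    intro x hx
    by_contra hle
    push_neg at hle
    have hxj : ∀ j, j ≠ 0 → |x j| ≤ 1/2 := by
      intro j hj
      rw [← hTne x j hj]
      exact (habs (T x) j).trans hle
    -- find a coordinate strictly below 1/2
    have hx0' : Filter.Tendsto x Filter.atTop (nhds 0) := by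
      have := x.zero_at_infty'
      rwa [Filter.cocompact_eq_cofinite, Nat.cofinite_eq_atTop] at this
    have hev : ∀ᶠ k in Filter.atTop, |x k| < 1/2 := by
      have := hx0'.eventually (Metric.ball_mem_nhds (0:ℝ) (by norm_num : (0:ℝ) < 1/2))
      filter_upwards [this] with k hk
      simpa [Real.dist_eq] using hk
    obtain ⟨a, ha⟩ := Filter.eventually_atTop.1 hev
    have hfb : |f x| < 1/2 := by
      rw [hfx]
      exact wtmul_bound_strict _ _ hxj (a+1) (Nat.succ_ne_zero a) (ha (a+1) (Nat.le_succ a))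
    have hx0 : 1 ≤ |x 0| := by
      by_contra h0
      push_neg at h0
      have : ‖x‖ ≤ max |x 0| (1/2) := by
        apply hnormle _ _ (le_trans (by norm_num) (le_max_right _ _))
        intro j
        rcases eq_or_ne j 0 with rfl | hj
        · exact le_max_left _ _
        · exact (hxj j hj).trans (le_max_right _ _)
      rw [hx] at this
      rcases max_cases |x 0| (1/2) with ⟨he, _⟩ | ⟨he, _⟩ <;> rw [he] at this <;> linarith
    have h1 : 1/2 < |x 0 - f x| := by
      calc 1/2 < |x 0| - |f x| := by linarith
        _ ≤ |x 0 - f x| := by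
            have := abs_sub_abs_le_abs_sub (x 0) (f x)
            linarith
    have h2 : |x 0 - f x| ≤ 1/2 := by
      rw [← hT0 x]
      exact (habs (T x) 0).trans hle
    linarith
  -- norms of test vectors
  have hyynorm : ∀ n : ℕ, ‖yy n‖ = 1 := by
    intro n
    apply le_antisymm
    · apply hnormle _ _ zero_le_one
      intro j
      simp only [yy_apply, yfun]
      split
      · norm_num
      · split <;> · rw [abs_of_nonneg (by norm_num)]; norm_num
    · have := habs (yy n) 0
      simpa [yfun] using this
  have hfyy : ∀ n : ℕ, f (yy n) = 1/2 - (2:ℝ)⁻¹ ^ (n+1) := by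
    intro n
    rw [hfx]
    exact tsum_wt_yfun n
  have hTyy : ∀ n : ℕ, ‖T (yy n)‖ = 1/2 + (2:ℝ)⁻¹ ^ (n+1) := by
    intro n
    have hpos : (0:ℝ) < (2:ℝ)⁻¹ ^ (n+1) := by positivity
    have hle1 : (2:ℝ)⁻¹ ^ (n+1) ≤ 1/2 := by
      calc (2:ℝ)⁻¹ ^ (n+1) ≤ (2:ℝ)⁻¹ ^ 1 :=
            pow_le_pow_of_le_one (by norm_num) (by norm_num) (by omega)
        _ = 1/2 := by norm_num
    apply le_antisymm
    · apply hnormle _ _ (by linarith)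
      intro j
      rcases eq_or_ne j 0 with rfl | hj
      · rw [hT0, hfyy]
        have hv : yy n 0 = 1 := by norm_num [yfun]
        rw [hv, abs_of_nonneg (by linarith)]
        ring_nf
        exact le_refl _
      · rw [hTne _ _ hj]
        simp only [yy_apply, yfun, if_neg hj]
        split <;> rw [abs_of_nonneg (by norm_num)] <;> linarith
    · have hval : (T (yy n)) 0 = 1/2 + (2:ℝ)⁻¹ ^ (n+1) := by
        rw [hT0, hfyy]
        have hv : yy n 0 = 1 := by norm_num [yfun]
        rw [hv]; ring
      calc (1:ℝ)/2 + (2:ℝ)⁻¹ ^ (n+1) = |(T (yy n)) 0| := by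
            rw [hval, abs_of_nonneg (by linarith)]
        _ ≤ ‖T (yy n)‖ := habs _ _
  constructor
  · rintro ⟨x, hx1, hx2⟩
    exact absurd hx2 (key x hx1).ne'
  · unfold minMod
    apply le_antisymm
    · apply le_of_forall_pos_le_add
      intro ε hε
      obtain ⟨n, hn⟩ := exists_pow_lt_of_lt_one hε (by norm_num : (2:ℝ)⁻¹ < 1)
      have hmem : ‖T (yy n)‖ ∈ (fun x => ‖T x‖) '' {x | ‖x‖ = 1} :=
        ⟨yy n, hyynorm n, rfl⟩
      have hbdd : BddBelow ((fun x => ‖T x‖) '' {x : ZeroAtInftyContinuousMap ℕ ℝ | ‖x‖ = 1}) := by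
        refine ⟨0, ?_⟩
        rintro b ⟨x, _, rfl⟩
        exact norm_nonneg _
      have h1 := csInf_le hbdd hmem
      have h2 : (2:ℝ)⁻¹ ^ (n+1) ≤ (2:ℝ)⁻¹ ^ n :=
        pow_le_pow_of_le_one (by norm_num) (by norm_num) (by omega)
      rw [hTyy n] at h1
      linarith
    · have hne : ((fun x => ‖T x‖) '' {x : ZeroAtInftyContinuousMap ℕ ℝ | ‖x‖ = 1}).Nonempty :=
        ⟨‖T (yy 0)‖, ⟨yy 0, hyynorm 0, rfl⟩⟩
      apply le_csInf hne
      rintro b ⟨x, hx, rfl⟩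
      exact (key x hx).le
end

section
/- The pair (c₀, c₀) fails the Compact Perturbation Property for the minimum modulus: there exist a bounded operator T : c₀ → c₀ that does not attain its minimum modulus and a compact operator K : c₀ → c₀ such that m(T + K) > m(T). -/
open Filter Topology Metric ZeroAtInfty

noncomputable section
namespace Stmt5Aux

abbrev c0 : Type := ZeroAtInftyContinuousMap ℕ ℝ

/-- coefficient sequence: a 0 = 3/4, a n = 1/2 for n ≥ 1. -/
def a (n : ℕ) : ℝ := if n = 0 then 3/4 else 1/2

lemma a_nonneg (n : ℕ) : 0 ≤ a n := by unfold a; split <;> norm_num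
lemma a_le_one (n : ℕ) : a n ≤ 1 := by unfold a; split <;> norm_num
lemma a_zero : a 0 = 3/4 := rfl
lemma a_pos' (n : ℕ) (h : 1 ≤ n) : a n = 1/2 := by unfold a; rw [if_neg (by omega)]

lemma abs_apply_le_norm (x : c0) (n : ℕ) : |x n| ≤ ‖x‖ := by
  rw [← ZeroAtInftyContinuousMap.norm_toBCF_eq_norm]
  exact x.toBCF.norm_coe_le_norm n

lemma norm_le_of (x : c0) {C : ℝ} (hC : 0 ≤ C) (h : ∀ n, |x n| ≤ C) : ‖x‖ ≤ C := by
  rw [← ZeroAtInftyContinuousMap.norm_toBCF_eq_norm]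
  exact (BoundedContinuousFunction.norm_le hC).mpr h

lemma tendsto_coord (x : c0) : Tendsto (fun n => x n) atTop (𝓝 0) := by
  have := x.zero_at_infty'
  rwa [cocompact_eq_atTop] at this

/-- The operator `T x n = x n - a n * x (n+1)` as a map into `c0`. -/
def Tfun (x : c0) : c0 where
  toFun := fun n => x n - a n * x (n + 1)
  continuous_toFun := continuous_of_discreteTopology
  zero_at_infty' := by
    rw [cocompact_eq_atTop]
    have h1 : Tendsto (fun n => x n) atTop (𝓝 0) := tendsto_coord x
    have h2 : Tendsto (fun n : ℕ => x (n + 1)) atTop (𝓝 0) :=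
      h1.comp (tendsto_add_atTop_nat 1)
    have h3 : Tendsto (fun n : ℕ => a n * x (n + 1)) atTop (𝓝 0) := by
      refine squeeze_zero_norm (a := fun n : ℕ => |x (n + 1)|) (fun n => ?_)
        (by simpa using h2.abs)
      rw [Real.norm_eq_abs, abs_mul]
      calc |a n| * |x (n + 1)| ≤ 1 * |x (n + 1)| := by
            apply mul_le_mul_of_nonneg_right _ (abs_nonneg _)
            rw [abs_of_nonneg (a_nonneg n)]; exact a_le_one n
        _ = |x (n + 1)| := one_mul _
    simpa using h1.sub h3

def Tlin : c0 →ₗ[ℝ] c0 where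
  toFun := Tfun
  map_add' x y := by
    ext n
    simp only [Tfun, ZeroAtInftyContinuousMap.coe_mk, ZeroAtInftyContinuousMap.add_apply]
    ring
  map_smul' c x := by
    ext n
    simp only [Tfun, ZeroAtInftyContinuousMap.coe_mk, ZeroAtInftyContinuousMap.smul_apply,
      smul_eq_mul, RingHom.id_apply]
    ring

def T : c0 →L[ℝ] c0 :=
  LinearMap.mkContinuous Tlin 2 (by
    intro x
    apply norm_le_of _ (by positivity)
    intro n
    show |x n - a n * x (n + 1)| ≤ 2 * ‖x‖
    calc |x n - a n * x (n + 1)| ≤ |x n| + |a n * x (n + 1)| := abs_sub _ _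
      _ ≤ ‖x‖ + ‖x‖ := by
          apply add_le_add (abs_apply_le_norm x n)
          rw [abs_mul, abs_of_nonneg (a_nonneg n)]
          calc a n * |x (n + 1)| ≤ 1 * ‖x‖ :=
                mul_le_mul (a_le_one n) (abs_apply_le_norm x _) (abs_nonneg _) one_pos.le
            _ = ‖x‖ := one_mul _
      _ = 2 * ‖x‖ := by ring)

@[simp] lemma T_apply (x : c0) (n : ℕ) : T x n = x n - a n * x (n + 1) := rfl

/-- the basis vector e₀ -/
def e0 : c0 where
  toFun := fun n => if n = 0 then (1 : ℝ) else 0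
  continuous_toFun := continuous_of_discreteTopology
  zero_at_infty' := by
    rw [cocompact_eq_atTop]
    apply tendsto_atTop_of_eventually_const (i₀ := 1)
    intro n hn
    exact if_neg (by omega)

@[simp] lemma e0_apply (n : ℕ) : e0 n = if n = 0 then (1:ℝ) else 0 := rfl

lemma e0_norm : ‖e0‖ = 1 := by
  apply le_antisymm
  · apply norm_le_of _ one_pos.le
    intro n
    by_cases h : n = 0 <;> simp [h]
  · have := abs_apply_le_norm e0 0
    simpa using this

def Klin : c0 →ₗ[ℝ] c0 where
  toFun x := ((1/4 : ℝ) * x 0) • e0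
  map_add' x y := by
    ext n
    simp only [ZeroAtInftyContinuousMap.add_apply, ZeroAtInftyContinuousMap.smul_apply,
      smul_eq_mul]
    ring
  map_smul' c x := by
    ext n
    simp only [ZeroAtInftyContinuousMap.smul_apply, smul_eq_mul, RingHom.id_apply]
    ring

def K : c0 →L[ℝ] c0 :=
  LinearMap.mkContinuous Klin 1 (by
    intro x
    show ‖((1/4 : ℝ) * x 0) • e0‖ ≤ 1 * ‖x‖
    apply norm_le_of _ (by positivity)
    intro n
    rw [ZeroAtInftyContinuousMap.smul_apply, smul_eq_mul, abs_mul, abs_mul, one_mul]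
    have h0 : |x 0| ≤ ‖x‖ := abs_apply_le_norm x 0
    have h1 : |e0 n| ≤ 1 := by by_cases h : n = 0 <;> simp [h]
    have h2 : |(1/4 : ℝ)| = 1/4 := by norm_num
    have h3 : |x 0| * |e0 n| ≤ ‖x‖ * 1 :=
      mul_le_mul h0 h1 (abs_nonneg _) (norm_nonneg x)
    rw [h2, mul_assoc]
    nlinarith [norm_nonneg x])

lemma K_apply (x : c0) : K x = ((1/4 : ℝ) * x 0) • e0 := rfl

lemma K_compact : IsCompactOperator (K : c0 →L[ℝ] c0) := by
  refine ⟨(fun t : ℝ => t • e0) '' Set.Icc (-1) 1, ?_, ?_⟩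
  · exact isCompact_Icc.image (by continuity)
  · apply Filter.mem_of_superset (Metric.ball_mem_nhds (0 : c0) one_pos)
    intro x hx
    refine ⟨(1/4 : ℝ) * x 0, ?_, rfl⟩
    rw [Set.mem_Icc, ← abs_le, abs_mul]
    have hx' : ‖x‖ < 1 := by simpa [dist_zero_right] using hx
    have := (abs_apply_le_norm x 0).trans hx'.le
    rw [abs_of_pos (by norm_num : (0:ℝ) < 1/4)]
    nlinarith [abs_nonneg (x 0)]

lemma TK_apply (x : c0) (n : ℕ) :
    (T + K) x n = (x n - a n * x (n + 1)) + ((1/4 : ℝ) * x 0) * e0 n := by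
  rw [ContinuousLinearMap.add_apply, ZeroAtInftyContinuousMap.add_apply, K_apply,
    ZeroAtInftyContinuousMap.smul_apply, smul_eq_mul, T_apply]

/-- Key recursion estimate. -/
lemma key (x : c0) (M : ℝ) (hM : ∀ n, 1 ≤ n → |x n - (1/2) * x (n + 1)| ≤ M) :
    ∀ k n, 1 ≤ n →
      |x n| ≤ 2 * M * (1 - (1/2 : ℝ) ^ k) + (1/2 : ℝ) ^ k * |x (n + k)| := by
  intro k
  induction k with
  | zero => intro n hn; simp
  | succ k ih =>
    intro n hn
    have hMnn : 0 ≤ M := (abs_nonneg _).trans (hM 1 le_rfl)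
    have h1 : |x n| ≤ M + (1/2) * |x (n + 1)| := by
      have h := hM n hn
      calc |x n| = |(x n - (1/2) * x (n + 1)) + (1/2) * x (n + 1)| := by congr 1; ring
        _ ≤ |x n - (1/2) * x (n + 1)| + |(1/2) * x (n + 1)| := abs_add_le _ _
        _ ≤ M + (1/2) * |x (n + 1)| := by
            rw [abs_mul]
            have : |(1/2 : ℝ)| = 1/2 := by norm_num
            rw [this]
            linarith
    have h2 := ih (n + 1) (by omega)
    have harg : n + 1 + k = n + (k + 1) := by omega
    rw [harg] at h2
    have hq : (0:ℝ) ≤ (1/2 : ℝ) ^ k := by positivity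
    calc |x n| ≤ M + (1/2) * |x (n + 1)| := h1
      _ ≤ M + (1/2) * (2 * M * (1 - (1/2 : ℝ) ^ k) + (1/2 : ℝ) ^ k * |x (n + (k + 1))|) := by
          linarith
      _ = 2 * M * (1 - (1/2 : ℝ) ^ (k + 1)) + (1/2 : ℝ) ^ (k + 1) * |x (n + (k + 1))| := by
          ring

lemma coord_le (x : c0) (M : ℝ) (hM : ∀ n, 1 ≤ n → |x n - (1/2) * x (n + 1)| ≤ M)
    (n : ℕ) (hn : 1 ≤ n) : |x n| ≤ 2 * M := by
  have hMnn : 0 ≤ M := (abs_nonneg _).trans (hM 1 le_rfl)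
  apply le_of_forall_pos_le_add
  intro ε hε
  obtain ⟨k, hk⟩ := exists_pow_lt_of_lt_one (show 0 < ε / (‖x‖ + 1) by positivity)
    (by norm_num : (1/2 : ℝ) < 1)
  have h := key x M hM k n hn
  have habs : |x (n + k)| ≤ ‖x‖ := abs_apply_le_norm x _
  have hq : (0:ℝ) ≤ (1/2 : ℝ) ^ k := by positivity
  have hk' : (1/2 : ℝ) ^ k * (‖x‖ + 1) < ε := by
    rw [div_eq_mul_inv] at hk
    have hpos : (0:ℝ) < ‖x‖ + 1 := by positivity
    calc (1/2 : ℝ) ^ k * (‖x‖ + 1) < ε * (‖x‖ + 1)⁻¹ * (‖x‖ + 1) := by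
          exact mul_lt_mul_of_pos_right hk hpos
      _ = ε := by field_simp
  have h2 : (1/2 : ℝ) ^ k * |x (n + k)| ≤ (1/2 : ℝ) ^ k * ‖x‖ :=
    mul_le_mul_of_nonneg_left habs hq
  nlinarith [norm_nonneg x]

lemma coord_one_lt (x : c0) (M : ℝ) (hM : ∀ n, 1 ≤ n → |x n - (1/2) * x (n + 1)| ≤ M)
    (hMpos : 0 < M) : |x 1| < 2 * M := by
  have habs : Tendsto (fun n => |x n|) atTop (𝓝 0) := by
    simpa using (tendsto_coord x).abs
  have hev : ∀ᶠ n in atTop, |x n| < 2 * M :=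
    habs.eventually_lt_const (by linarith)
  obtain ⟨N, hN⟩ := eventually_atTop.mp hev
  have h := key x M hM N 1 le_rfl
  have h2 : |x (1 + N)| < 2 * M := hN (1 + N) (by omega)
  have hqpos : (0:ℝ) < (1/2 : ℝ) ^ N := by positivity
  nlinarith

lemma hM_ofT (x : c0) (n : ℕ) (hn : 1 ≤ n) :
    |x n - (1/2) * x (n + 1)| ≤ ‖T x‖ := by
  have := abs_apply_le_norm (T x) n
  rwa [T_apply, a_pos' n hn] at this

lemma hM_ofTK (x : c0) (n : ℕ) (hn : 1 ≤ n) :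
    |x n - (1/2) * x (n + 1)| ≤ ‖(T + K) x‖ := by
  have := abs_apply_le_norm ((T + K) x) n
  rw [TK_apply, a_pos' n hn] at this
  rw [e0_apply, if_neg (by omega)] at this
  simpa using this

end Stmt5Aux

end

namespace Stmt5Aux

lemma bddBelow_img (S : c0 →L[ℝ] c0) :
    BddBelow ((fun x => ‖S x‖) '' {x : c0 | ‖x‖ = 1}) := by
  refine ⟨0, ?_⟩
  rintro y ⟨x, -, rfl⟩
  exact norm_nonneg _

/-- The minimum modulus of T is at most 2/5. -/
lemma minMod_T_le : minMod T ≤ 2/5 := by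
  apply le_of_forall_pos_le_add
  intro ε hε
  set m : ℝ := min ε (1/2) with hm
  have hm0 : 0 < m := lt_min hε (by norm_num)
  have hm1 : m ≤ 1/2 := min_le_right _ _
  have hmε : m ≤ ε := min_le_left _ _
  set r : ℝ := 1 - m with hr
  have hr0 : (0:ℝ) < r := by simp only [hr]; linarith
  have hr1 : r < 1 := by simp only [hr]; linarith
  -- the almost-minimizing vector
  have hzero : Tendsto (fun n : ℕ => if n = 0 then (1:ℝ) else (4/5) * r ^ (n - 1))
      (cocompact ℕ) (𝓝 0) := by
    rw [cocompact_eq_atTop]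
    have hrpow : Tendsto (fun k : ℕ => r ^ k) atTop (𝓝 0) :=
      tendsto_pow_atTop_nhds_zero_of_lt_one hr0.le hr1
    have h2 : Tendsto (fun n : ℕ => r ^ (n - 1)) atTop (𝓝 0) :=
      hrpow.comp (tendsto_sub_atTop_nat 1)
    have h3 : Tendsto (fun n : ℕ => (4/5 : ℝ) * r ^ (n - 1)) atTop (𝓝 0) := by
      simpa using h2.const_mul (4/5 : ℝ)
    apply h3.congr'
    filter_upwards [eventually_ge_atTop 1] with n hn
    rw [if_neg (by omega)]
  set xr : c0 := ⟨⟨fun n => if n = 0 then (1:ℝ) else (4/5) * r ^ (n - 1),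
    continuous_of_discreteTopology⟩, hzero⟩ with hxr
  have hxr_apply : ∀ n, xr n = if n = 0 then (1:ℝ) else (4/5) * r ^ (n - 1) := fun n => rfl
  have hpow_le : ∀ k : ℕ, r ^ k ≤ 1 := fun k => pow_le_one₀ hr0.le hr1.le
  have hpow_nn : ∀ k : ℕ, (0:ℝ) ≤ r ^ k := fun k => by positivity
  have hxr_norm : ‖xr‖ = 1 := by
    apply le_antisymm
    · apply norm_le_of _ one_pos.le
      intro n
      rw [hxr_apply]
      by_cases h : n = 0
      · simp [h]
      · rw [if_neg h, abs_of_nonneg (by positivity)]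
        nlinarith [hpow_le (n - 1), hpow_nn (n - 1)]
    · have := abs_apply_le_norm xr 0
      rw [hxr_apply 0] at this
      simpa using this
  have hTxr : ‖T xr‖ ≤ 2/5 + ε := by
    apply norm_le_of _ (by positivity)
    intro n
    rw [T_apply]
    match n with
    | 0 =>
      rw [a_zero, hxr_apply 0, hxr_apply 1]
      norm_num
      linarith
    | (m + 1) =>
      rw [a_pos' (m + 1) (by omega), hxr_apply (m + 1), hxr_apply (m + 2)]
      rw [if_neg (by omega), if_neg (by omega)]
      have harg1 : m + 1 - 1 = m := by omega
      have harg2 : m + 2 - 1 = m + 1 := by omega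
      rw [harg1, harg2]
      have hval : (4/5 : ℝ) * r ^ m - 1/2 * ((4/5) * r ^ (m + 1))
          = (4/5) * r ^ m * (1 - r/2) := by ring
      rw [hval, abs_of_nonneg (by nlinarith [hpow_nn m])]
      nlinarith [hpow_le m, hpow_nn m]
  have hmem : ‖T xr‖ ∈ (fun x => ‖T x‖) '' {x : c0 | ‖x‖ = 1} :=
    ⟨xr, hxr_norm, rfl⟩
  calc minMod T ≤ ‖T xr‖ := csInf_le (bddBelow_img T) hmem
    _ ≤ 2/5 + ε := hTxr

/-- Strict lower bound: every unit vector has ‖T x‖ > 2/5. -/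
lemma T_norm_gt (x : c0) (hx : ‖x‖ = 1) : 2/5 < ‖T x‖ := by
  set M : ℝ := ‖T x‖ with hMdef
  by_contra hcon
  push_neg at hcon
  have hM : ∀ n, 1 ≤ n → |x n - (1/2) * x (n + 1)| ≤ M := fun n hn => hM_ofT x n hn
  have hM0 : 0 ≤ M := norm_nonneg _
  have hx0ineq : |x 0| ≤ M + (3/4) * |x 1| := by
    have h := abs_apply_le_norm (T x) 0
    rw [T_apply, a_zero] at h
    calc |x 0| = |(x 0 - 3/4 * x 1) + 3/4 * x 1| := by congr 1; ring
      _ ≤ |x 0 - 3/4 * x 1| + |3/4 * x 1| := abs_add_le _ _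
      _ ≤ M + (3/4) * |x 1| := by
          rw [abs_mul]
          have : |(3/4 : ℝ)| = 3/4 := by norm_num
          rw [this]
          exact add_le_add h le_rfl
  have hMpos : 0 < M := by
    rcases eq_or_lt_of_le hM0 with h | h
    · exfalso
      have hall : ∀ n, |x n| ≤ 0 := by
        intro n
        match n with
        | 0 =>
          have h1 : |x 1| ≤ 2 * M := coord_le x M hM 1 le_rfl
          calc |x 0| ≤ M + (3/4) * |x 1| := hx0ineq
            _ ≤ 0 := by rw [← h]; linarith [abs_nonneg (x 1)]
        | (m + 1) =>
          have := coord_le x M hM (m + 1) (by omega)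
          rw [← h] at this
          linarith
      have : ‖x‖ ≤ 0 := norm_le_of x le_rfl hall
      rw [hx] at this
      linarith
    · exact h
  -- every coordinate n ≥ 1 is at most 2M ≤ 4/5, and coordinate 1 strictly
  have h1lt : |x 1| < 2 * M := coord_one_lt x M hM hMpos
  have hcoords : ∀ n, 1 ≤ n → |x n| ≤ 2 * M := coord_le x M hM
  -- the norm is attained at coordinate 0
  have hmax : (1:ℝ) ≤ max |x 0| (4/5) := by
    rw [← hx]
    apply norm_le_of _ (le_trans (by norm_num) (le_max_right |x 0| (4/5)))
    intro n
    match n with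
    | 0 => exact le_max_left _ _
    | (m + 1) =>
      have := hcoords (m + 1) (by omega)
      have h2 : 2 * M ≤ 4/5 := by linarith
      exact le_trans (by linarith) (le_max_right _ _)
  have hx0 : 1 ≤ |x 0| := by
    rcases le_max_iff.mp hmax with h | h
    · exact h
    · norm_num at h
  linarith

/-- Lower bound for the perturbed operator. -/
lemma minMod_TK_ge : 1/2 ≤ minMod (T + K) := by
  apply le_csInf
  · exact ⟨‖(T + K) e0‖, e0, e0_norm, rfl⟩
  · rintro b ⟨x, hx, rfl⟩
    simp only [Set.mem_setOf_eq] at hx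
    set M : ℝ := ‖(T + K) x‖ with hMdef
    have hM : ∀ n, 1 ≤ n → |x n - (1/2) * x (n + 1)| ≤ M := fun n hn => hM_ofTK x n hn
    have hcoords : ∀ n, 1 ≤ n → |x n| ≤ 2 * M := coord_le x M hM
    have h1 : |x 1| ≤ 2 * M := hcoords 1 le_rfl
    have h0 : |(5/4) * x 0 - (3/4) * x 1| ≤ M := by
      have := abs_apply_le_norm ((T + K) x) 0
      rw [TK_apply, a_zero, e0_apply, if_pos rfl] at this
      have heq : x 0 - 3/4 * x 1 + 1/4 * x 0 * 1 = (5/4) * x 0 - (3/4) * x 1 := by ring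
      rwa [heq] at this
    have hx0 : |x 0| ≤ 2 * M := by
      have hstep : (5/4) * |x 0| ≤ M + (3/4) * |x 1| := by
        have habs : |(5/4) * x 0| ≤ |(5/4) * x 0 - (3/4) * x 1| + |(3/4) * x 1| := by
          calc |(5/4) * x 0| = |((5/4) * x 0 - (3/4) * x 1) + (3/4) * x 1| := by congr 1; ring
            _ ≤ _ := abs_add_le _ _
        rw [abs_mul, abs_mul] at habs
        have h54 : |(5/4 : ℝ)| = 5/4 := by norm_num
        have h34 : |(3/4 : ℝ)| = 3/4 := by norm_num
        rw [h54, h34] at habs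
        linarith
      linarith
    have hall : ∀ n, |x n| ≤ 2 * M := by
      intro n
      match n with
      | 0 => exact hx0
      | (m + 1) => exact hcoords (m + 1) (by omega)
    have hMnn : 0 ≤ M := norm_nonneg _
    have : ‖x‖ ≤ 2 * M := norm_le_of x (by linarith) hall
    rw [hx] at this
    linarith

end Stmt5Aux

/-- The pair (c₀, c₀) fails the CPPm: there exist a bounded operator
T on c₀ not attaining its minimum modulus and a compact operator K with
m(T + K) > m(T). -/
theorem stmt_5 :
    ∃ T K : ZeroAtInftyContinuousMap ℕ ℝ →L[ℝ] ZeroAtInftyContinuousMap ℕ ℝ,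
      (¬ ∃ x : ZeroAtInftyContinuousMap ℕ ℝ, ‖x‖ = 1 ∧ ‖T x‖ = minMod T) ∧
      IsCompactOperator K ∧
      minMod T < minMod (T + K) := by
  refine ⟨Stmt5Aux.T, Stmt5Aux.K, ?_, Stmt5Aux.K_compact, ?_⟩
  · rintro ⟨x, hx1, hx2⟩
    have h1 := Stmt5Aux.T_norm_gt x hx1
    have h2 := Stmt5Aux.minMod_T_le
    rw [hx2] at h1
    linarith
  · calc minMod Stmt5Aux.T ≤ 2/5 := Stmt5Aux.minMod_T_le
      _ < 1/2 := by norm_num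
      _ ≤ minMod (Stmt5Aux.T + Stmt5Aux.K) := Stmt5Aux.minMod_TK_ge
end

section
/- Let Y be a Banach space and f ∈ Y* with ‖f‖ = 1. Define T : ℝ ⊕_∞ Y → ℝ ⊕_∞ Y by T(a,y) = (a − f(y), y). Then the minimum modulus of T satisfies m(T) = 1/2. -/
theorem minMod_eq_of_forall_le_of_forall_lt {X Y : Type*} [NormedAddCommGroup X]
    [NormedAddCommGroup Y] [NormedSpace ℝ X] [NormedSpace ℝ Y] {T : X →L[ℝ] Y} {c : ℝ}
    (hle : ∀ x, ‖x‖ = 1 → c ≤ ‖T x‖) (hlt : ∀ ε > 0, ∃ x, ‖x‖ = 1 ∧ ‖T x‖ < c + ε) :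
    minMod T = c := by
  obtain ⟨x₀, hx₀, -⟩ := hlt 1 one_pos
  refine csInf_eq_of_forall_ge_of_forall_gt_exists_lt ⟨_, x₀, hx₀, rfl⟩ ?_ fun w hw => ?_
  · rintro - ⟨x, hx, rfl⟩
    exact hle x hx
  · obtain ⟨x, hx, hTx⟩ := hlt (w - c) (sub_pos.mpr hw)
    exact ⟨_, ⟨x, hx, rfl⟩, by linarith⟩

section RealFunctional

variable {Y : Type*} [NormedAddCommGroup Y] [NormedSpace ℝ Y]

theorem ContinuousLinearMap.exists_norm_lt_one_lt_apply (f : Y →L[ℝ] ℝ) {r : ℝ}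
    (hr : r < ‖f‖) : ∃ y, ‖y‖ < 1 ∧ r < f y := by
  obtain ⟨y, hy, hfy⟩ := f.exists_lt_apply_of_lt_opNorm hr
  rcases lt_abs.mp hfy with hpos | hneg
  · exact ⟨y, hy, hpos⟩
  · exact ⟨-y, by rwa [norm_neg], by rwa [map_neg]⟩

theorem ContinuousLinearMap.abs_apply_le_norm {f : Y →L[ℝ] ℝ} (hf : ‖f‖ ≤ 1) (y : Y) :
    |f y| ≤ ‖y‖ := by
  simpa using f.le_of_opNorm_le hf y

theorem max_abs_norm_le_two_mul_max_abs_sub_apply {f : Y →L[ℝ] ℝ} (hf : ‖f‖ ≤ 1) (a : ℝ)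
    (y : Y) : max |a| ‖y‖ ≤ 2 * max |a - f y| ‖y‖ := by
  have hfy := f.abs_apply_le_norm hf y
  have ha : |a| ≤ |a - f y| + ‖y‖ := by
    calc |a| = |(a - f y) + f y| := by rw [sub_add_cancel]
      _ ≤ |a - f y| + |f y| := abs_add_le _ _
      _ ≤ |a - f y| + ‖y‖ := by gcongr
  have := le_max_left |a - f y| ‖y‖
  have := le_max_right |a - f y| ‖y‖
  exact max_le (by linarith) (by linarith [norm_nonneg y])

end RealFunctional

theorem stmt_8_general
    (Y : Type*) [NormedAddCommGroup Y] [NormedSpace ℝ Y]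
    (f : Y →L[ℝ] ℝ) (hf : ‖f‖ = 1)
    (T : WithLp ⊤ (ℝ × Y) →L[ℝ] WithLp ⊤ (ℝ × Y))
    (hT : ∀ (a : ℝ) (y : Y),
      T ((WithLp.equiv ⊤ (ℝ × Y)).symm (a, y)) =
        (WithLp.equiv ⊤ (ℝ × Y)).symm (a - f y, y)) :
    minMod T = 1 / 2 := by
  have hnorm : ∀ x : WithLp ⊤ (ℝ × Y), ‖x‖ = max |x.fst| ‖x.snd‖ := WithLp.prod_norm_eq_sup
  have hTnorm : ∀ x : WithLp ⊤ (ℝ × Y), ‖T x‖ = max |x.fst - f x.snd| ‖x.snd‖ := fun x => by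
    rw [show T x = _ from hT x.fst x.snd, hnorm]
    rfl
  refine minMod_eq_of_forall_le_of_forall_lt (fun x hx => ?_) fun ε hε => ?_
  · have := max_abs_norm_le_two_mul_max_abs_sub_apply hf.le x.fst x.snd
    rw [hnorm] at hx
    rw [hTnorm]
    linarith
  · obtain ⟨y, hy, hfy⟩ := f.exists_norm_lt_one_lt_apply (r := 1 - 2 * ε) (by linarith)
    have hfy_le : f y ≤ ‖y‖ := (le_abs_self _).trans (f.abs_apply_le_norm hf.le y)
    refine ⟨WithLp.toLp ⊤ (1, (1 / 2 : ℝ) • y), ?_, ?_⟩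
    · rw [hnorm]
      simp only [WithLp.toLp_fst, WithLp.toLp_snd, abs_one, norm_smul, one_div, norm_inv,
        Real.norm_ofNat, sup_eq_left]
      linarith
    · rw [hTnorm]
      simp only [WithLp.toLp_fst, WithLp.toLp_snd, map_smul, smul_eq_mul, norm_smul, one_div,
        norm_inv, Real.norm_ofNat, sup_lt_iff]
      constructor
      · rw [abs_of_pos (by linarith)]
        linarith
      · linarith

/-- For Y Banach, f ∈ Y* with ‖f‖ = 1 and T(a,y) = (a - f(y), y) on
ℝ ⊕_∞ Y, one has m(T) = 1/2. -/
theorem stmt_8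
    (Y : Type*) [NormedAddCommGroup Y] [NormedSpace ℝ Y] [CompleteSpace Y]
    (f : Y →L[ℝ] ℝ) (hf : ‖f‖ = 1)
    (T : WithLp ⊤ (ℝ × Y) →L[ℝ] WithLp ⊤ (ℝ × Y))
    (hT : ∀ (a : ℝ) (y : Y),
      T ((WithLp.equiv ⊤ (ℝ × Y)).symm (a, y)) =
        (WithLp.equiv ⊤ (ℝ × Y)).symm (a - f y, y)) :
    minMod T = 1 / 2 :=
  stmt_8_general Y f hf T hT
end

section
/- Let Y be a Banach space and f ∈ Y* with ‖f‖ = 1 such that f does not attain its norm (there is no y ∈ S_Y with |f(y)| = 1). Define T : ℝ ⊕_∞ Y → ℝ ⊕_∞ Y by T(a,y) = (a − f(y), y). Then T does not attain its minimum modulus; i.e., there is no (a,y) with max{|a|,‖y‖} = 1 and max{|a−f(y)|, ‖y‖} = 1/2. -/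
/-- If ‖f‖ = 1 and f does not attain its norm, then there is no
(a, y) with max{|a|, ‖y‖} = 1 and max{|a - f(y)|, ‖y‖} = 1/2; that is,
T(a,y) = (a - f(y), y) does not attain its minimum modulus on ℝ ⊕_∞ Y. -/
theorem stmt_9
    (Y : Type*) [NormedAddCommGroup Y] [NormedSpace ℝ Y] [CompleteSpace Y]
    (f : Y →L[ℝ] ℝ) (hf : ‖f‖ = 1)
    (hna : ¬ ∃ y : Y, ‖y‖ = 1 ∧ |f y| = 1) :
    ¬ ∃ (a : ℝ) (y : Y), max |a| ‖y‖ = 1 ∧ max |a - f y| ‖y‖ = 1 / 2 := by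
  rintro ⟨a, y, h1, h2⟩
  have hy2 : ‖y‖ ≤ 1/2 := le_of_max_le_right h2.le
  have hafy : |a - f y| ≤ 1/2 := le_of_max_le_left h2.le
  have ha : |a| = 1 := by
    rcases max_eq_iff.mp h1 with ⟨he, _⟩ | ⟨he, _⟩
    · exact he
    · linarith
  have hfy_le : |f y| ≤ ‖y‖ := by
    calc |f y| ≤ ‖f‖ * ‖y‖ := f.le_opNorm y
    _ = ‖y‖ := by rw [hf, one_mul]
  have hfy_ge : (1:ℝ)/2 ≤ |f y| := by
    have := abs_sub_abs_le_abs_sub a (f y)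
    have h3 : |a| - |f y| ≤ |a - f y| := by
      simpa using this
    linarith
  have hy : ‖y‖ = 1/2 := le_antisymm hy2 (le_trans hfy_ge hfy_le)
  have hfy : |f y| = 1/2 := le_antisymm (hy ▸ hfy_le) hfy_ge
  apply hna
  refine ⟨(2:ℝ) • y, ?_, ?_⟩
  · rw [norm_smul, hy]; norm_num
  · rw [map_smul]
    simp only [smul_eq_mul, abs_mul]
    rw [hfy]; norm_num
end

section
/- Let Y be a Banach space, f ∈ Y* with ‖f‖ = 1 not attaining its norm, and T(a,y) = (a − f(y), y) on ℝ ⊕_∞ Y. If (a,y) is a unit vector with ‖T(a,y)‖ = 1/2, then ‖y‖ ≤ 1/2, |a| = 1, and 1/2 ≤ |f(y)| ≤ ‖y‖ ≤ 1/2, so |f(y/‖y‖)| = 1, a contradiction. -/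
/-- If ‖f‖ = 1 and f does not attain its norm, then no unit vector
(a, y) of ℝ ⊕_∞ Y satisfies ‖T(a,y)‖ = max{|a - f(y)|, ‖y‖} = 1/2: such (a,y)
would force ‖y‖ ≤ 1/2, |a| = 1, 1/2 ≤ |f(y)| ≤ ‖y‖ ≤ 1/2, hence
|f(y/‖y‖)| = 1, a contradiction. -/
theorem stmt_16
    (Y : Type*) [NormedAddCommGroup Y] [NormedSpace ℝ Y] [CompleteSpace Y]
    (f : Y →L[ℝ] ℝ) (hf : ‖f‖ = 1)
    (hna : ∀ z : Y, ‖z‖ = 1 → |f z| < 1)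
    (a : ℝ) (y : Y)
    (h1 : max |a| ‖y‖ = 1)
    (h2 : max |a - f y| ‖y‖ = 1 / 2) :
    False := by
  have hy : ‖y‖ ≤ 1 / 2 := le_of_max_le_right (le_of_eq h2)
  have haf : |a - f y| ≤ 1 / 2 := le_of_max_le_left (le_of_eq h2)
  have ha : |a| = 1 := by
    rcases max_cases |a| ‖y‖ with ⟨h, _⟩ | ⟨h, _⟩
    · rw [← h1, h]
    · linarith [h1 ▸ h ▸ hy]
  have hfy1 : (1:ℝ)/2 ≤ |f y| := by
    have := abs_sub_abs_le_abs_sub a (f y)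
    have h2' : |a| - |f y| ≤ 1/2 := le_trans this haf
    linarith
  have hfy2 : |f y| ≤ ‖y‖ := by
    have := f.le_opNorm y
    rw [hf, one_mul] at this
    simpa using this
  have hyeq : ‖y‖ = 1 / 2 := le_antisymm hy (le_trans hfy1 hfy2)
  have hy0 : y ≠ 0 := by
    intro h; rw [h, norm_zero] at hyeq; norm_num at hyeq
  have hz : ‖(‖y‖⁻¹ • y)‖ = 1 := by
    rw [norm_smul, norm_inv, norm_norm, inv_mul_cancel₀ (norm_ne_zero_iff.mpr hy0)]
  have := hna _ hz
  rw [map_smul] at this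
  have : |‖y‖⁻¹ * f y| < 1 := by simpa using this
  rw [abs_mul, abs_inv, abs_norm, hyeq] at this
  have : |f y| < 1/2 := by
    have h2 : (0:ℝ) < 1/2 := by norm_num
    nlinarith [this]
  linarith
end
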